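/- Let u(x) = ∑_{k ∈ F} c_k e^{2πi k·x} be a trigonometric polynomial on ℝ^d with finite F ⊂ ℤ^d, and let p ≥ 1 be a natural number. Define u_n(x) = u(nx). Then for every continuous compactly supported φ : ℝ^d → ℂ, lim_{n→∞} ∫ φ(x) (u_n(x))^p dx = ( ∑_{k_1,…,k_p ∈ F, k_1+⋯+k_p = 0} c_{k_1}⋯c_{k_p} ) · ∫ φ(x) dx. -/

import Mathlib

/-! Expanding the `p`-th power writes `φ · u_n ^ p` as a finite combination of
`c_{k₁} ⋯ c_{kₚ} · φ(x) e^{2πi n (k₁ + ⋯ + kₚ)·x}`. By the Riemann–Lebesgue lemma each term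
with nonzero total frequency integrates to `o(1)` as `n → ∞`, and each term with total
frequency zero integrates to `c_{k₁} ⋯ c_{kₚ} ∫ φ`. -/

open MeasureTheory Filter Topology

noncomputable def expc {d : ℕ} (k : Fin d → ℤ) (x : Fin d → ℝ) : ℂ :=
  Complex.exp (2 * Real.pi * Complex.I * (∑ i, (k i : ℝ) * x i))

section RiemannLebesgue

variable {E V : Type*} [NormedAddCommGroup E] [NormedSpace ℂ E]
  [AddCommGroup V] [TopologicalSpace V] [IsTopologicalAddGroup V] [T2Space V]
  [MeasurableSpace V] [BorelSpace V] [Module ℝ V] [ContinuousSMul ℝ V] [FiniteDimensional ℝ V]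

theorem tendsto_integral_fourierChar_mul_smul_cocompact (f : V → E) (μ : Measure V)
    [μ.IsAddHaarMeasure] {L : StrongDual ℝ V} (hL : L ≠ 0) :
    Tendsto (fun t : ℝ => ∫ v, Real.fourierChar (t * L v) • f v ∂μ) (cocompact ℝ) (𝓝 0) := by
  have hray : Tendsto (fun t : ℝ => t • -L) (cocompact ℝ) (cocompact (StrongDual ℝ V)) :=
    (isClosedEmbedding_smul_left (neg_ne_zero.mpr hL)).tendsto_cocompact
  convert (tendsto_integral_exp_smul_cocompact f μ).comp hray using 3 with t v
  simp

end RiemannLebesgue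

section Expc

variable {d : ℕ}

def freqFunctional (k : Fin d → ℤ) : StrongDual ℝ (Fin d → ℝ) :=
  ∑ i, (k i : ℝ) • ContinuousLinearMap.proj i

lemma freqFunctional_apply (k : Fin d → ℤ) (x : Fin d → ℝ) :
    freqFunctional k x = ∑ i, (k i : ℝ) * x i := by
  simp [freqFunctional]

lemma freqFunctional_ne_zero {k : Fin d → ℤ} (hk : k ≠ 0) : freqFunctional k ≠ 0 := by
  contrapose! hk
  ext i
  simpa [freqFunctional_apply, Pi.single_apply] using congr($hk (Pi.single i 1))

lemma expc_smul_eq_fourierChar (k : Fin d → ℤ) (t : ℝ) (x : Fin d → ℝ) :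
    expc k (t • x) = Real.fourierChar (t * freqFunctional k x) := by
  have hsum : ∑ i, (k i : ℝ) * (t • x) i = t * ∑ i, (k i : ℝ) * x i := by
    rw [Finset.mul_sum]
    exact Finset.sum_congr rfl fun i _ => by simp only [Pi.smul_apply, smul_eq_mul]; ring
  rw [Real.fourierChar_apply, expc, freqFunctional_apply, ← hsum]
  push_cast
  ring_nf

lemma expc_sum {ι : Type*} (s : Finset ι) (K : ι → Fin d → ℤ) (x : Fin d → ℝ) :
    expc (∑ j ∈ s, K j) x = ∏ j ∈ s, expc (K j) x := by
  simp only [expc, ← Complex.exp_sum, ← Finset.mul_sum, Finset.sum_apply, Int.cast_sum,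
    Finset.sum_mul]
  push_cast
  rw [Finset.sum_comm]

lemma expc_zero (x : Fin d → ℝ) : expc 0 x = 1 := by
  simp [expc]

lemma continuous_expc (k : Fin d → ℤ) : Continuous (expc k) := by
  unfold expc
  fun_prop

lemma norm_expc (k : Fin d → ℤ) (x : Fin d → ℝ) : ‖expc k x‖ = 1 := by
  simp [expc, Complex.norm_exp]

lemma integrable_mul_expc_smul {φ : (Fin d → ℝ) → ℂ} (hφ : Integrable φ) (k : Fin d → ℤ)
    (t : ℝ) : Integrable (fun x => φ x * expc k (t • x)) :=
  hφ.mul_bdd ((continuous_expc k).comp (continuous_const_smul t)).aestronglyMeasurable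
    (.of_forall fun x => (norm_expc k (t • x)).le)

lemma pow_sum_mul_expc (F : Finset (Fin d → ℤ)) (c : (Fin d → ℤ) → ℂ) (p : ℕ)
    (x : Fin d → ℝ) :
    (∑ k ∈ F, c k * expc k x) ^ p =
      ∑ K ∈ Fintype.piFinset fun _ : Fin p => F, (∏ i, c (K i)) * expc (∑ i, K i) x := by
  rw [← Fin.prod_const, Finset.prod_univ_sum]
  simp_rw [Finset.prod_mul_distrib, expc_sum]

lemma tendsto_integral_mul_expc_natCast_smul (φ : (Fin d → ℝ) → ℂ) (k : Fin d → ℤ) :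
    Tendsto (fun n : ℕ => ∫ x, φ x * expc k ((n : ℝ) • x)) atTop
      (𝓝 (if k = 0 then ∫ x, φ x else 0)) := by
  split_ifs with hk
  · simp [hk, expc_zero]
  · have hRL :=
      tendsto_integral_fourierChar_mul_smul_cocompact φ volume (freqFunctional_ne_zero hk)
    refine (hRL.comp (tendsto_natCast_atTop_atTop.mono_right atTop_le_cocompact)).congr
      fun n => ?_
    simp only [Function.comp_apply, expc_smul_eq_fourierChar, Circle.smul_def, smul_eq_mul,
      mul_comm]

lemma integral_mul_sum_mul_expc_pow {φ : (Fin d → ℝ) → ℂ} (hφ : Integrable φ)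
    (F : Finset (Fin d → ℤ)) (c : (Fin d → ℤ) → ℂ) (p : ℕ) (t : ℝ) :
    ∫ x, φ x * (∑ k ∈ F, c k * expc k (t • x)) ^ p =
      ∑ K ∈ Fintype.piFinset fun _ : Fin p => F,
        (∏ i, c (K i)) * ∫ x, φ x * expc (∑ i, K i) (t • x) := by
  simp_rw [pow_sum_mul_expc, Finset.mul_sum, mul_left_comm (φ _)]
  rw [integral_finsetSum _ fun K _ => (integrable_mul_expc_smul hφ _ t).const_mul _]
  simp_rw [integral_const_mul]

end Expc

theorem trigPoly_power_limit_general {d p : ℕ} (F : Finset (Fin d → ℤ))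
    (c : (Fin d → ℤ) → ℂ)
    (φ : (Fin d → ℝ) → ℂ) (hφc : Continuous φ) (hφs : HasCompactSupport φ) :
    Tendsto
      (fun n : ℕ => ∫ x : Fin d → ℝ,
        φ x * (∑ k ∈ F, c k * expc k ((n : ℝ) • x)) ^ p)
      atTop
      (nhds
        ((∑ k ∈ (Fintype.piFinset fun _ : Fin p => F).filter
            (fun k => ∑ i, k i = 0), ∏ i, c (k i)) * ∫ x : Fin d → ℝ, φ x)) := by
  simp_rw [integral_mul_sum_mul_expc_pow (hφc.integrable_of_hasCompactSupport hφs)]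
  rw [Finset.sum_filter, Finset.sum_mul]
  simp_rw [ite_mul, zero_mul, ← mul_ite_zero]
  exact tendsto_finsetSum _ fun K _ =>
    (tendsto_integral_mul_expc_natCast_smul φ (∑ i, K i)).const_mul _

/-- The limit of `∫ φ (u_n)^p` for a rescaled trigonometric polynomial is the
sum of products of coefficients over all `p`-tuples of frequencies in `F`
summing to zero, times `∫ φ`. -/
theorem trigPoly_power_limit {d p : ℕ} (hp : 1 ≤ p) (F : Finset (Fin d → ℤ))
    (c : (Fin d → ℤ) → ℂ)
    (φ : (Fin d → ℝ) → ℂ) (hφc : Continuous φ) (hφs : HasCompactSupport φ) :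
    Tendsto
      (fun n : ℕ => ∫ x : Fin d → ℝ,
        φ x * (∑ k ∈ F, c k * expc k ((n : ℝ) • x)) ^ p)
      atTop
      (nhds
        ((∑ k ∈ (Fintype.piFinset fun _ : Fin p => F).filter
            (fun k => ∑ i, k i = 0), ∏ i, c (k i)) * ∫ x : Fin d → ℝ, φ x)) :=
  trigPoly_power_limit_general F c φ hφc hφs
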